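/- Suppose I, J of size r are such that det(A_{I,J}) = ν·det(A_◇) with ν ∈ (0,1), where A_◇ is a maximal-volume r×r submatrix of A. Then ‖A − A_{:,J} A_{I,J}^{-1} A_{I,:}‖_C ≤ (1/ν)·(r+1)·σ_{r+1}(A). -/

import Mathlib

open Matrix BigOperators Filter

noncomputable def sval {m n : ℕ} (A : Matrix (Fin m) (Fin n) ℝ) (k : Fin n) : ℝ :=
  Real.sqrt ((Matrix.isHermitian_conjTranspose_mul_self A).eigenvalues
    (Tuple.sort (Matrix.isHermitian_conjTranspose_mul_self A).eigenvalues (Fin.rev k)))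

noncomputable def chebNorm {m n : ℕ} (A : Matrix (Fin m) (Fin n) ℝ) : ℝ :=
  ⨆ i, ⨆ j, |A i j|

noncomputable def frobNorm {m n : ℕ} (A : Matrix (Fin m) (Fin n) ℝ) : ℝ :=
  Real.sqrt (∑ i, ∑ j, (A i j) ^ 2)

/-!
By the Schur complement formula, the `(i, j)` entry of `A - A_{:,J} A_{I,J}⁻¹ A_{I,:}` is
`det A_{I+i, J+j} / det A_{I,J}`, and `|det A_{I,J}| = ν |det A_◇|`. So it suffices to bound every
`(r+1) × (r+1)` minor `B` of `A` by `(r+1) |det A_◇| σ_{r+1}(A)`. The entries of `adj B` are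
`r × r` minors of `A`, hence at most `|det A_◇|`. By the min-max principle some `c ≠ 0`, supported
on the columns of `B` and orthogonal to the top `r` right singular vectors of `A`, has
`‖B c‖ ≤ σ_{r+1}(A) ‖c‖`; then `|det B| ‖c‖ = ‖adj B (B c)‖ ≤ (r+1) |det A_◇| σ_{r+1}(A) ‖c‖`.
-/

namespace Matrix

variable {R : Type*}

theorem det_submatrix_eq_zero_of_not_injective {ι α β : Type*} [Fintype ι] [DecidableEq ι]
    [CommRing R] (A : Matrix α β R) {f : ι → α} {g : ι → β}
    (h : ¬(Function.Injective f ∧ Function.Injective g)) : (A.submatrix f g).det = 0 := by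
  simp_rw [not_and_or, Function.not_injective_iff] at h
  obtain ⟨i, j, hfij, hij⟩ | ⟨i, j, hgij, hij⟩ := h
  · exact det_zero_of_row_eq hij (by ext; simp [hfij])
  · exact det_zero_of_column_eq hij (by simp [hgij])

theorem det_submatrix_snoc_snoc {α β : Type*} [Field R] {r : ℕ} (A : Matrix α β R)
    (I : Fin r → α) (J : Fin r → β) (hinv : IsUnit (A.submatrix I J)) (i : α) (j : β) :
    (A.submatrix (Fin.snoc I i) (Fin.snoc J j)).det
      = (A.submatrix I J).det *
        (A - A.submatrix id J * (A.submatrix I J)⁻¹ * A.submatrix I id) i j := by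
  have := hinv.invertible
  have hblocks : (A.submatrix (Fin.snoc I i) (Fin.snoc J j)).submatrix finSumFinEquiv
      finSumFinEquiv = fromBlocks (A.submatrix I J) (of fun k (_ : Fin 1) => A (I k) j)
        (of fun (_ : Fin 1) l => A i (J l)) (of fun _ _ => A i j) := by
    ext (k | k) (l | l) <;> simp [Fin.snoc]
  rw [← det_submatrix_equiv_self finSumFinEquiv, hblocks, det_fromBlocks₁₁, det_fin_one,
    invOf_eq_nonsing_inv]
  simp [mul_apply]

theorem exists_ne_zero_mulVec_eq_zero_of_card_lt {ι κ : Type*} [Fintype ι] [Fintype κ]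
    [Field R] (M : Matrix ι κ R) (h : Fintype.card ι < Fintype.card κ) : ∃ c ≠ 0, M *ᵥ c = 0 := by
  have := LinearMap.ker_ne_bot_of_finrank_lt (f := M.mulVecLin) (by simpa using h)
  obtain ⟨c, hc, hc0⟩ := (Submodule.ne_bot_iff _).mp this
  exact ⟨c, hc0, hc⟩

variable [Field R] [LinearOrder R] [IsStrictOrderedRing R]

theorem dotProduct_self_comp_le {ι κ : Type*} [Fintype ι] [Fintype κ] (v : κ → R) {e : ι → κ}
    (he : Function.Injective e) : (v ∘ e) ⬝ᵥ (v ∘ e) ≤ v ⬝ᵥ v := by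
  classical
  simp only [dotProduct, Function.comp_apply]
  rw [← Finset.sum_image (f := fun k => v k * v k) (fun a _ b _ h => he h)]
  exact Finset.sum_le_sum_of_subset_of_nonneg (Finset.subset_univ _)
    fun k _ _ => mul_self_nonneg (v k)

theorem mulVec_dotProduct_self_le {ι κ : Type*} [Fintype ι] [Fintype κ] (M : Matrix ι κ R)
    {K : R} (hM : ∀ i j, |M i j| ≤ K) (v : κ → R) :
    (M *ᵥ v) ⬝ᵥ (M *ᵥ v) ≤ Fintype.card ι * Fintype.card κ * K ^ 2 * (v ⬝ᵥ v) := by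
  have hrow (i : ι) : (M *ᵥ v) i ^ 2 ≤ Fintype.card κ * K ^ 2 * (v ⬝ᵥ v) := calc
    (M *ᵥ v) i ^ 2 ≤ (∑ j, M i j ^ 2) * ∑ j, v j ^ 2 := Finset.sum_mul_sq_le_sq_mul_sq _ _ _
    _ ≤ (∑ _j : κ, K ^ 2) * ∑ j, v j ^ 2 := by
        gcongr ?_ * _
        exact Finset.sum_le_sum fun j _ => sq_le_sq.mpr ((hM i j).trans (le_abs_self K))
    _ = Fintype.card κ * K ^ 2 * (v ⬝ᵥ v) := by simp [dotProduct, sq]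
  calc (M *ᵥ v) ⬝ᵥ (M *ᵥ v) = ∑ i, (M *ᵥ v) i ^ 2 := by simp [dotProduct, sq]
    _ ≤ ∑ _i : ι, Fintype.card κ * K ^ 2 * (v ⬝ᵥ v) := Finset.sum_le_sum fun i _ => hrow i
    _ = _ := by simp [mul_assoc]

theorem abs_det_le_of_abs_adjugate_le {ι : Type*} [Fintype ι] [DecidableEq ι]
    (B : Matrix ι ι R) {K s : R} (hK : 0 ≤ K) (hs : 0 ≤ s) (hadj : ∀ i j, |B.adjugate i j| ≤ K)
    {c : ι → R} (hc : c ≠ 0) (hBc : (B *ᵥ c) ⬝ᵥ (B *ᵥ c) ≤ s ^ 2 * (c ⬝ᵥ c)) :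
    |B.det| ≤ Fintype.card ι * K * s := by
  have hcc : 0 < c ⬝ᵥ c := by
    obtain ⟨t, ht⟩ := Function.ne_iff.mp hc
    exact Finset.sum_pos' (fun i _ => mul_self_nonneg (c i)) ⟨t, Finset.mem_univ t, by simpa⟩
  have hsq : B.det ^ 2 * (c ⬝ᵥ c) ≤ (Fintype.card ι * K * s) ^ 2 * (c ⬝ᵥ c) := calc
    B.det ^ 2 * (c ⬝ᵥ c) = (B.adjugate *ᵥ (B *ᵥ c)) ⬝ᵥ (B.adjugate *ᵥ (B *ᵥ c)) := by
        rw [mulVec_mulVec, adjugate_mul, smul_mulVec, one_mulVec, smul_dotProduct,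
          dotProduct_smul, smul_eq_mul, smul_eq_mul]
        ring
    _ ≤ Fintype.card ι * Fintype.card ι * K ^ 2 * (s ^ 2 * (c ⬝ᵥ c)) :=
        (mulVec_dotProduct_self_le _ hadj _).trans (by gcongr)
    _ = (Fintype.card ι * K * s) ^ 2 * (c ⬝ᵥ c) := by ring
  exact abs_le_of_sq_le_sq (le_of_mul_le_mul_right hsq hcc) (by positivity)

theorem IsHermitian.dotProduct_mulVec_le_of_forall_lt {n : ℕ}
    {H : Matrix (Fin n) (Fin n) ℝ} (hH : H.IsHermitian) (p : Fin n) {x : Fin n → ℝ}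
    (hx : ∀ q, p < q → (star (hH.eigenvectorUnitary : Matrix (Fin n) (Fin n) ℝ) *ᵥ x)
      (Tuple.sort hH.eigenvalues q) = 0) :
    x ⬝ᵥ (H *ᵥ x) ≤ hH.eigenvalues (Tuple.sort hH.eigenvalues p) * (x ⬝ᵥ x) := by
  set V : Matrix (Fin n) (Fin n) ℝ := (hH.eigenvectorUnitary : Matrix (Fin n) (Fin n) ℝ)
  set μ := hH.eigenvalues
  set σ := Tuple.sort μ
  set y := star V *ᵥ x with hy
  have hxV : x ᵥ* V = y := by
    rw [hy, star_eq_conjTranspose, conjTranspose_eq_transpose_of_trivial, ← vecMul_transpose,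
      transpose_transpose]
  have hquad : x ⬝ᵥ (H *ᵥ x) = ∑ i, μ i * y i ^ 2 := by
    rw [hH.spectral_theorem, Unitary.conjStarAlgAut_apply, ← mulVec_mulVec, ← mulVec_mulVec,
      dotProduct_mulVec, hxV]
    simp only [dotProduct, RCLike.ofReal_real_eq_id, CompTriple.comp_eq, mulVec_diagonal, sq]
    exact Finset.sum_congr rfl fun i _ => by ring
  have hyy : y ⬝ᵥ y = x ⬝ᵥ x := by
    nth_rw 1 [← hxV]
    rw [← dotProduct_mulVec, hy, mulVec_mulVec,
      mem_unitaryGroup_iff.mp hH.eigenvectorUnitary.2, one_mulVec]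
  calc x ⬝ᵥ (H *ᵥ x) = ∑ q, μ (σ q) * y (σ q) ^ 2 := by
        rw [hquad, ← Equiv.sum_comp σ]
    _ ≤ ∑ q, μ (σ p) * y (σ q) ^ 2 := by
        refine Finset.sum_le_sum fun q _ => ?_
        rcases le_or_gt q p with hqp | hpq
        · exact mul_le_mul_of_nonneg_right (Tuple.monotone_sort μ hqp) (sq_nonneg _)
        · simp [y, hx q hpq]
    _ = μ (σ p) * (x ⬝ᵥ x) := by
        rw [← Finset.mul_sum, Equiv.sum_comp σ (fun i => y i ^ 2), ← hyy]
        simp [dotProduct, sq]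

end Matrix

theorem sval_nonneg {m n : ℕ} (A : Matrix (Fin m) (Fin n) ℝ) (k : Fin n) : 0 ≤ sval A k :=
  Real.sqrt_nonneg _

theorem exists_ne_zero_mulVec_dotProduct_le_sval_sq {m n r : ℕ} (hrn : r < n)
    (A : Matrix (Fin m) (Fin n) ℝ) {κ : Type*} [Fintype κ] (hκ : r < Fintype.card κ)
    (P : Matrix (Fin n) κ ℝ) :
    ∃ c ≠ 0,
      ((A * P) *ᵥ c) ⬝ᵥ ((A * P) *ᵥ c) ≤ sval A ⟨r, hrn⟩ ^ 2 * ((P *ᵥ c) ⬝ᵥ (P *ᵥ c)) := by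
  set hH := isHermitian_conjTranspose_mul_self A
  set p := Fin.rev ⟨r, hrn⟩
  set σ := Tuple.sort hH.eigenvalues
  -- `Tuple.sort` orders increasingly, so the `r` largest eigenvalues sit at the indices `> p`.
  have hcard : Fintype.card (Set.Ioi p) < Fintype.card κ := by
    simp [p, Fin.card_Ioi, Fin.val_rev]
    omega
  obtain ⟨c, hc0, hc⟩ := exists_ne_zero_mulVec_eq_zero_of_card_lt
    ((star (hH.eigenvectorUnitary : Matrix (Fin n) (Fin n) ℝ) * P).submatrix
      (fun q : Set.Ioi p => σ q) id) hcard
  refine ⟨c, hc0, ?_⟩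
  have hx (q) (hq : p < q) : (star (hH.eigenvectorUnitary : Matrix (Fin n) (Fin n) ℝ) *ᵥ
      (P *ᵥ c)) (σ q) = 0 := by
    rw [mulVec_mulVec]
    exact congrFun hc ⟨q, hq⟩
  calc ((A * P) *ᵥ c) ⬝ᵥ ((A * P) *ᵥ c) = (P *ᵥ c) ⬝ᵥ ((Aᴴ * A) *ᵥ (P *ᵥ c)) := by
        simp only [← mulVec_mulVec]
        rw [dotProduct_mulVec (P *ᵥ c) Aᴴ, conjTranspose_eq_transpose_of_trivial,
          vecMul_transpose]
    _ ≤ _ := hH.dotProduct_mulVec_le_of_forall_lt p hx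
    _ = _ := by
        rw [sval, Real.sq_sqrt (eigenvalues_conjTranspose_mul_self_nonneg A _)]

theorem abs_det_submatrix_le_sval {m n r : ℕ} (hrn : r < n) (A : Matrix (Fin m) (Fin n) ℝ)
    {K : ℝ} (hK : 0 ≤ K)
    (hminor : ∀ (I : Fin r → Fin m) (J : Fin r → Fin n),
      Function.Injective I → Function.Injective J → |(A.submatrix I J).det| ≤ K)
    (I : Fin (r + 1) → Fin m) (J : Fin (r + 1) → Fin n) :
    |(A.submatrix I J).det| ≤ (r + 1) * K * sval A ⟨r, hrn⟩ := by
  by_cases hinj : Function.Injective I ∧ Function.Injective J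
  swap
  · rw [det_submatrix_eq_zero_of_not_injective A hinj, abs_zero]
    have := sval_nonneg A ⟨r, hrn⟩
    positivity
  obtain ⟨hI, hJ⟩ := hinj
  have hadj (i j : Fin (r + 1)) : |(A.submatrix I J).adjugate i j| ≤ K := by
    rw [adjugate_fin_succ_eq_det_submatrix, abs_mul, abs_pow, abs_neg, abs_one, one_pow,
      one_mul, submatrix_submatrix]
    exact hminor _ _ (hI.comp Fin.succAbove_right_injective)
      (hJ.comp Fin.succAbove_right_injective)
  set P : Matrix (Fin n) (Fin (r + 1)) ℝ := (1 : Matrix (Fin n) (Fin n) ℝ).submatrix id J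
  have hAP : A * P = A.submatrix id J := by
    simpa using mul_submatrix_one (Equiv.refl _) J A
  have hPP : Pᵀ * P = 1 := by
    ext s t
    simp [P, mul_apply, one_apply, hJ.eq_iff]
  obtain ⟨c, hc0, hc⟩ := exists_ne_zero_mulVec_dotProduct_le_sval_sq hrn A (by simp) P
  have hPc : (P *ᵥ c) ⬝ᵥ (P *ᵥ c) = c ⬝ᵥ c := by
    rw [dotProduct_comm, dotProduct_mulVec, ← vecMul_transpose, vecMul_vecMul, hPP,
      vecMul_one]
  rw [hAP, hPc] at hc
  have hrows :
      (A.submatrix I J *ᵥ c) ⬝ᵥ (A.submatrix I J *ᵥ c) ≤ sval A ⟨r, hrn⟩ ^ 2 * (c ⬝ᵥ c) :=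
    (dotProduct_self_comp_le (A.submatrix id J *ᵥ c) hI).trans hc
  simpa using abs_det_le_of_abs_adjugate_le _ hK (sval_nonneg A _) hadj hc0 hrows

theorem stmt14_general {m n r : ℕ} (hrn : r < n)
    (A : Matrix (Fin m) (Fin n) ℝ) (I : Fin r → Fin m) (J : Fin r → Fin n)
    (hinv : IsUnit (A.submatrix I J))
    (Imax : Fin r → Fin m) (Jmax : Fin r → Fin n)
    (hmax : ∀ (I' : Fin r → Fin m) (J' : Fin r → Fin n),
      Function.Injective I' → Function.Injective J' →
        |(A.submatrix I' J').det| ≤ |(A.submatrix Imax Jmax).det|)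
    (ν : ℝ) (hν : ν ∈ Set.Ioo (0 : ℝ) 1)
    (hvol : (A.submatrix I J).det = ν * (A.submatrix Imax Jmax).det) :
    chebNorm (A - A.submatrix id J * (A.submatrix I J)⁻¹ * A.submatrix I id)
      ≤ (1 / ν) * (r + 1) * sval A ⟨r, hrn⟩ := by
  set K := |(A.submatrix Imax Jmax).det|
  have hν0 : 0 < ν := hν.1
  have hdet : |(A.submatrix I J).det| = ν * K := by rw [hvol, abs_mul, abs_of_pos hν0]
  have hK : 0 < K := by
    have := ((isUnit_iff_isUnit_det _).mp hinv).ne_zero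
    rw [← abs_pos, hdet] at this
    exact pos_of_mul_pos_right this hν0.le
  have hbound : 0 ≤ 1 / ν * (r + 1) * sval A ⟨r, hrn⟩ := by
    have := sval_nonneg A ⟨r, hrn⟩
    positivity
  refine Real.iSup_le (fun i => Real.iSup_le (fun j => ?_) hbound) hbound
  have hij := abs_det_submatrix_le_sval hrn A hK.le hmax (Fin.snoc I i) (Fin.snoc J j)
  rw [det_submatrix_snoc_snoc A I J hinv i j, abs_mul, hdet] at hij
  refine le_of_mul_le_mul_left (hij.trans_eq ?_) (mul_pos hν0 hK)
  field_simp

theorem stmt14 {m n r : ℕ} (hrm : r < m) (hrn : r < n)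
    (A : Matrix (Fin m) (Fin n) ℝ) (I : Fin r → Fin m) (J : Fin r → Fin n)
    (hI : Function.Injective I) (hJ : Function.Injective J)
    (hinv : IsUnit (A.submatrix I J))
    (Imax : Fin r → Fin m) (Jmax : Fin r → Fin n)
    (hImax : Function.Injective Imax) (hJmax : Function.Injective Jmax)
    (hmax : ∀ (I' : Fin r → Fin m) (J' : Fin r → Fin n),
      Function.Injective I' → Function.Injective J' →
        |(A.submatrix I' J').det| ≤ |(A.submatrix Imax Jmax).det|)
    (ν : ℝ) (hν : ν ∈ Set.Ioo (0 : ℝ) 1)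
    (hvol : (A.submatrix I J).det = ν * (A.submatrix Imax Jmax).det) :
    chebNorm (A - A.submatrix id J * (A.submatrix I J)⁻¹ * A.submatrix I id)
      ≤ (1 / ν) * (r + 1) * sval A ⟨r, hrn⟩ :=
  stmt14_general hrn A I J hinv Imax Jmax hmax ν hν hvol
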